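/- Let (J^n)_{n ≥ −4} be real-valued functionals on a set V, and suppose that for each h in a sequence decreasing to 0 there is φ(h) ∈ V minimizing J(h)(·) = Σ_{n ≥ −4} h^n J^n(·) over V, where the series converges for all arguments and all small h, and where φ(h) is independent of h. Define Q_{−4} = V and inductively Q_{n+1} = {φ ∈ Q_n : J^n(φ) = inf_{ψ ∈ Q_n} J^n(ψ)}. Assume additionally that for each φ ∈ V the tail sums Σ_{k > n} h^{k−n} J^k(φ) tend to 0 as h → 0. Then the common minimizer φ belongs to ⋂_{n ≥ −4} Q_n. -/
import Mathlib


open Filter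

/-- The decreasing family of Pantz minimizing sets: `pantzQ J n` corresponds to
`Q_{n-4}` of the paper, with `pantzQ J 0 = Q_{-4} = V` and
`Q_{n+1} = {φ ∈ Q_n : J^n(φ) = inf_{Q_n} J^n}`. -/
def pantzQ {V : Type*} (J : ℤ → V → ℝ) : ℕ → Set V
  | 0 => Set.univ
  | n + 1 => {φ ∈ pantzQ J n | ∀ ψ ∈ pantzQ J n, J ((n : ℤ) - 4) φ ≤ J ((n : ℤ) - 4) ψ}

/-- Pantz's hierarchical minimization principle. `E k φ = J(h k)(φ) = Σ_{n ≥ -4} (h k)^n J^n(φ)`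
(encoded via `(h k)^4 * E k φ = Σ_{m ≥ 0} (h k)^m J^{m-4}(φ)`), `φstar` minimizes each `E k`,
and for every `n` the tail `Σ_{k > n} h^{k-n} J^k(φ)` tends to `0` as `h → 0`. Then `φstar`
belongs to every set `Q_n`. -/
theorem stmt8 {V : Type*} (J : ℤ → V → ℝ) (E : ℕ → V → ℝ) (φstar : V)
    (h : ℕ → ℝ) (hpos : ∀ k, 0 < h k) (hanti : StrictAnti h)
    (hlim : Tendsto h atTop (nhds 0))
    (hsum : ∀ k (φ : V),
      HasSum (fun m : ℕ => (h k) ^ m * J ((m : ℤ) - 4) φ) ((h k) ^ 4 * E k φ))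
    (htail : ∀ (n : ℤ) (φ : V),
      Tendsto (fun k => ∑' m : ℕ, (h k) ^ (m + 1) * J (n + 1 + (m : ℤ)) φ) atTop (nhds 0))
    (hmin : ∀ k, ∀ ψ : V, E k φstar ≤ E k ψ) :
    ∀ n : ℕ, φstar ∈ pantzQ J n := by
  have key : ∀ n : ℕ, φstar ∈ pantzQ J n ∧
      ∀ ψ ∈ pantzQ J n, ∀ m : ℕ, m < n → J ((m : ℤ) - 4) ψ = J ((m : ℤ) - 4) φstar := by
    intro n
    induction n with
    | zero => exact ⟨trivial, fun ψ _ m hm => absurd hm (Nat.not_lt_zero m)⟩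
    | succ n ih =>
      obtain ⟨hφQ, hIH⟩ := ih
      set T : V → ℕ → ℝ :=
        fun φ k => ∑' m : ℕ, (h k) ^ (m + 1) * J ((n : ℤ) - 4 + 1 + (m : ℤ)) φ with hT
      have hdecomp : ∀ (φ : V) (k : ℕ), (h k) ^ 4 * E k φ =
          (∑ i ∈ Finset.range (n + 1), (h k) ^ i * J ((i : ℤ) - 4) φ) + (h k) ^ n * T φ k := by
        intro φ k
        have hs := hsum k φ
        have hsm := hs.summable
        have h1 := Summable.sum_add_tsum_nat_add (n + 1) hsm
        rw [hs.tsum_eq] at h1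
        have h2 : (∑' i : ℕ, (h k) ^ (i + (n + 1)) * J (((i + (n + 1) : ℕ) : ℤ) - 4) φ)
            = (h k) ^ n * T φ k := by
          rw [hT, ← tsum_mul_left]
          apply tsum_congr
          intro m
          have hc : ((m + (n + 1) : ℕ) : ℤ) - 4 = (n : ℤ) - 4 + 1 + (m : ℤ) := by
            push_cast; ring
          rw [hc]; ring
        rw [h2] at h1
        exact h1.symm
      have step : ∀ ψ ∈ pantzQ J n, J ((n : ℤ) - 4) φstar ≤ J ((n : ℤ) - 4) ψ := by
        intro ψ hψ
        have hk : ∀ k, J ((n : ℤ) - 4) φstar + T φstar k ≤ J ((n : ℤ) - 4) ψ + T ψ k := by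
          intro k
          have hE := hmin k ψ
          have h4 : (0 : ℝ) < (h k) ^ 4 := pow_pos (hpos k) 4
          have hmul := mul_le_mul_of_nonneg_left hE h4.le
          rw [hdecomp φstar k, hdecomp ψ k] at hmul
          rw [Finset.sum_range_succ, Finset.sum_range_succ] at hmul
          have heq : ∑ i ∈ Finset.range n, (h k) ^ i * J ((i : ℤ) - 4) ψ
              = ∑ i ∈ Finset.range n, (h k) ^ i * J ((i : ℤ) - 4) φstar :=
            Finset.sum_congr rfl fun i hi => by rw [hIH ψ hψ i (Finset.mem_range.mp hi)]
          rw [heq] at hmul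
          have hn : (0 : ℝ) < (h k) ^ n := pow_pos (hpos k) n
          have hmul2 : (h k) ^ n * (J ((n : ℤ) - 4) φstar + T φstar k)
              ≤ (h k) ^ n * (J ((n : ℤ) - 4) ψ + T ψ k) := by
            rw [mul_add, mul_add]; linarith
          exact le_of_mul_le_mul_left hmul2 hn
        have l1 : Tendsto (fun k => J ((n : ℤ) - 4) φstar + T φstar k) atTop
            (nhds (J ((n : ℤ) - 4) φstar + 0)) :=
          tendsto_const_nhds.add (htail ((n : ℤ) - 4) φstar)
        have l2 : Tendsto (fun k => J ((n : ℤ) - 4) ψ + T ψ k) atTop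
            (nhds (J ((n : ℤ) - 4) ψ + 0)) :=
          tendsto_const_nhds.add (htail ((n : ℤ) - 4) ψ)
        have := le_of_tendsto_of_tendsto' l1 l2 hk
        simpa using this
      refine ⟨⟨hφQ, step⟩, ?_⟩
      intro ψ hψ m hm
      rcases Nat.lt_succ_iff_lt_or_eq.mp hm with hlt | rfl
      · exact hIH ψ hψ.1 m hlt
      · exact le_antisymm (hψ.2 φstar hφQ) (step ψ hψ.1)
  exact fun n => (key n).1
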